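/- arXiv:1012.5515 — 10 statements merged into one kernel-verified Lean document; each statement's English description precedes it below -/
import Mathlib

section
/- Let d : V1 → V0 be a 2-term dg Leibniz algebra over a field K, i.e. bilinear maps l2 : V0 × V0 → V0, l2 : V0 × V1 → V1, l2 : V1 × V0 → V1 satisfy, for all x,y,z ∈ V0 and m,n ∈ V1: (a) d(l2(x,m)) = l2(x,dm); (b) d(l2(m,x)) = l2(dm,x); (c) l2(dm,n) = l2(m,dn); (d) l2(x,l2(y,z)) − l2(l2(x,y),z) − l2(y,l2(x,z)) = 0; (e1) l2(x,l2(y,m)) − l2(l2(x,y),m) − l2(y,l2(x,m)) = 0; (e2) l2(x,l2(m,y)) − l2(l2(x,m),y) − l2(m,l2(x,y)) = 0; (e3) l2(m,l2(x,y)) − l2(l2(m,x),y) − l2(x,l2(m,y)) = 0. Define [m,n] := l2(dm,n) on V1 and [u,v] := l2(u,v) on V0. Then: (i) [·,·] on V1 satisfies the left Leibniz identity [m,[n,p]] = [[m,n],p] + [n,[m,p]] for all m,n,p ∈ V1; and (ii) d is a morphism of Leibniz algebras, i.e. d[m,n] = [dm,dn] for all m,n ∈ V1. -/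
/-- In a 2-term dg Leibniz algebra `d : V1 → V0`, the bracket
    `[m,n] := l2(dm,n)` on `V1` is a (left) Leibniz bracket, and `d` is a
    morphism of Leibniz algebras. -/
theorem stmt1 {K V0 V1 : Type*} [Field K]
    [AddCommGroup V0] [Module K V0] [AddCommGroup V1] [Module K V1]
    (d : V1 →ₗ[K] V0)
    (l200 : V0 →ₗ[K] V0 →ₗ[K] V0)
    (l201 : V0 →ₗ[K] V1 →ₗ[K] V1)
    (l210 : V1 →ₗ[K] V0 →ₗ[K] V1)
    (ha : ∀ (x : V0) (m : V1), d (l201 x m) = l200 x (d m))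
    (hb : ∀ (x : V0) (m : V1), d (l210 m x) = l200 (d m) x)
    (hc : ∀ (m n : V1), l201 (d m) n = l210 m (d n))
    (hd : ∀ x y z : V0,
      l200 x (l200 y z) - l200 (l200 x y) z - l200 y (l200 x z) = 0)
    (he1 : ∀ (x y : V0) (m : V1),
      l201 x (l201 y m) - l201 (l200 x y) m - l201 y (l201 x m) = 0)
    (he2 : ∀ (x y : V0) (m : V1),
      l201 x (l210 m y) - l210 (l201 x m) y - l210 m (l200 x y) = 0)
    (he3 : ∀ (x y : V0) (m : V1),
      l210 m (l200 x y) - l210 (l210 m x) y - l201 x (l210 m y) = 0) :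
    (∀ m n p : V1,
      l201 (d m) (l201 (d n) p)
        = l201 (d (l201 (d m) n)) p + l201 (d n) (l201 (d m) p)) ∧
    (∀ m n : V1, d (l201 (d m) n) = l200 (d m) (d n)) := by
  refine ⟨fun m n p => ?_, fun m n => ha _ _⟩
  have h := he1 (d m) (d n) p
  rw [sub_sub, sub_eq_zero] at h
  rw [ha, h]
end

section
/- Let d : V1 → V0 be a 2-term dg Leibniz algebra over a field K (bilinear maps l2 : V0 × V0 → V0, l2 : V0 × V1 → V1, l2 : V1 × V0 → V1 satisfying conditions (a),(b),(c),(d),(e1),(e2),(e3) with l3 = 0). Set μ := d, [m,n] := l2(dm,n) on V1, [u,v] := l2(u,v) on V0, l_u m := l2(u,m), r_u m := l2(m,u). Then for all u ∈ V0 and m,n ∈ V1 the crossed module identities hold: μ(l_u m) = [u, μ(m)], μ(r_u m) = [μ(m), u], l_{μ(m)} n = [m,n] = r_{μ(n)} m, l_u[m,n] = [l_u m, n] + [m, l_u n], r_u[m,n] = [m, r_u n] − [n, r_u m], and [l_u m + r_u m, n] = 0. -/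
/-- In a 2-term dg Leibniz algebra, setting `μ := d`,
    `[m,n] := l2(dm,n)` on `V1`, `[u,v] := l2(u,v)` on `V0`, `l_u m := l2(u,m)`,
    `r_u m := l2(m,u)`, the crossed module identities hold. -/
theorem stmt3 {K V0 V1 : Type*} [Field K]
    [AddCommGroup V0] [Module K V0] [AddCommGroup V1] [Module K V1]
    (d : V1 →ₗ[K] V0)
    (l200 : V0 →ₗ[K] V0 →ₗ[K] V0)
    (l201 : V0 →ₗ[K] V1 →ₗ[K] V1)
    (l210 : V1 →ₗ[K] V0 →ₗ[K] V1)
    (ha : ∀ (x : V0) (m : V1), d (l201 x m) = l200 x (d m))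
    (hb : ∀ (x : V0) (m : V1), d (l210 m x) = l200 (d m) x)
    (hc : ∀ (m n : V1), l201 (d m) n = l210 m (d n))
    (hd : ∀ x y z : V0,
      l200 x (l200 y z) - l200 (l200 x y) z - l200 y (l200 x z) = 0)
    (he1 : ∀ (x y : V0) (m : V1),
      l201 x (l201 y m) - l201 (l200 x y) m - l201 y (l201 x m) = 0)
    (he2 : ∀ (x y : V0) (m : V1),
      l201 x (l210 m y) - l210 (l201 x m) y - l210 m (l200 x y) = 0)
    (he3 : ∀ (x y : V0) (m : V1),
      l210 m (l200 x y) - l210 (l210 m x) y - l201 x (l210 m y) = 0) :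
    -- μ(l_u m) = [u, μ(m)]
    (∀ (u : V0) (m : V1), d (l201 u m) = l200 u (d m)) ∧
    -- μ(r_u m) = [μ(m), u]
    (∀ (u : V0) (m : V1), d (l210 m u) = l200 (d m) u) ∧
    -- l_{μ(m)} n = [m,n]
    (∀ m n : V1, l201 (d m) n = l201 (d m) n) ∧
    -- [m,n] = r_{μ(n)} m
    (∀ m n : V1, l201 (d m) n = l210 m (d n)) ∧
    -- l_u [m,n] = [l_u m, n] + [m, l_u n]
    (∀ (u : V0) (m n : V1),
      l201 u (l201 (d m) n)
        = l201 (d (l201 u m)) n + l201 (d m) (l201 u n)) ∧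
    -- r_u [m,n] = [m, r_u n] − [n, r_u m]
    (∀ (u : V0) (m n : V1),
      l210 (l201 (d m) n) u
        = l201 (d m) (l210 n u) - l201 (d n) (l210 m u)) ∧
    -- [l_u m + r_u m, n] = 0
    (∀ (u : V0) (m n : V1), l201 (d (l201 u m + l210 m u)) n = 0) := by
  refine ⟨ha, hb, fun m n => rfl, hc, ?_, ?_, ?_⟩
  · intro u m n
    rw [ha]
    have h := he1 u (d m) n
    rw [sub_sub, sub_eq_zero] at h
    exact h
  · intro u m n
    have h := he3 (d n) u m
    rw [sub_sub, sub_eq_zero] at h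
    rw [hc m n, hc m (l210 n u), hb, h]
    abel
  · intro u m n
    have h1 := he1 u (d m) n
    have h2 := he1 (d m) u n
    rw [map_add, ha, hb, map_add, LinearMap.add_apply]
    have hsum : l201 (l200 u (d m)) n + l201 (l200 (d m) u) n =
        -((l201 u (l201 (d m) n) - l201 (l200 u (d m)) n - l201 (d m) (l201 u n)) +
          (l201 (d m) (l201 u n) - l201 (l200 (d m) u) n - l201 u (l201 (d m) n))) := by
      abel
    rw [hsum, h1, h2]
    simp
end

section
/- Let μ : g → h be a morphism of Leibniz algebras over a field K (both brackets bilinear satisfying the left Leibniz identity, μ linear with μ[g1,g2]_g = [μ(g1),μ(g2)]_h), together with bilinear left and right actions l, r : h × g → g forming a representation (l_{[h1,h2]} = l_{h1}∘l_{h2} − l_{h2}∘l_{h1}, r_{[h1,h2]} = l_{h1}∘r_{h2} − r_{h2}∘l_{h1}, r_{h2}∘l_{h1} = −r_{h2}∘r_{h1}) and satisfying the crossed module conditions: μ(l_h g) = [h,μ(g)]_h, μ(r_h g) = [μ(g),h]_h, l_{μ(g)} g' = [g,g']_g = r_{μ(g')} g, l_h[g,g']_g = [l_h g, g']_g + [g,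 l_h g']_g, r_h[g,g']_g = [g, r_h g']_g − [g', r_h g]_g, and [l_h g + r_h g, g']_g = 0, for all g,g' ∈ g, h,h1,h2 ∈ h. Define V1 := g, V0 := h, d := μ, l2(u,v) := [u,v]_h, l2(u,m) := l_u m, l2(m,u) := r_u m, and l3 := 0. Then all the conditions (a),(b),(c),(d),(e1),(e2),(e3),(f) of a 2-term sh Leibniz algebra hold, i.e. this data is a 2-term dg Leibniz algebra. -/
/-- A crossed module of Leibniz algebras `μ : g → h` (with a
    representation `(l,r)` of `h` on `g` and the crossed module conditions)
    gives rise to a 2-term dg Leibniz algebra: with `V1 := g`, `V0 := h`,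
    `d := μ`, `l2(u,v) := [u,v]_h`, `l2(u,m) := l_u m`, `l2(m,u) := r_u m`,
    `l3 := 0`, all conditions (a),(b),(c),(d),(e1),(e2),(e3),(f) of a 2-term
    sh Leibniz algebra hold. -/
theorem stmt4 {K G H : Type*} [Field K]
    [AddCommGroup G] [Module K G] [AddCommGroup H] [Module K H]
    (bg : G →ₗ[K] G →ₗ[K] G) (bh : H →ₗ[K] H →ₗ[K] H)
    (hgLeib : ∀ a b c : G, bg a (bg b c) = bg (bg a b) c + bg b (bg a c))
    (hhLeib : ∀ a b c : H, bh a (bh b c) = bh (bh a b) c + bh b (bh a c))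
    (μ : G →ₗ[K] H)
    (hμ : ∀ a b : G, μ (bg a b) = bh (μ a) (μ b))
    (l r : H →ₗ[K] G →ₗ[K] G)
    (rep1 : ∀ (u v : H) (m : G), l (bh u v) m = l u (l v m) - l v (l u m))
    (rep2 : ∀ (u v : H) (m : G), r (bh u v) m = l u (r v m) - r v (l u m))
    (rep3 : ∀ (u v : H) (m : G), r v (l u m) = - r v (r u m))
    (cm1 : ∀ (u : H) (m : G), μ (l u m) = bh u (μ m))
    (cm1' : ∀ (u : H) (m : G), μ (r u m) = bh (μ m) u)
    (cm2 : ∀ m n : G, l (μ m) n = bg m n)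
    (cm2' : ∀ m n : G, r (μ n) m = bg m n)
    (cm3 : ∀ (u : H) (m n : G), l u (bg m n) = bg (l u m) n + bg m (l u n))
    (cm4 : ∀ (u : H) (m n : G), r u (bg m n) = bg m (r u n) - bg n (r u m))
    (cm5 : ∀ (u : H) (m n : G), bg (l u m + r u m) n = 0) :
    -- (a) d(l2(x,m)) = l2(x,dm)
    (∀ (x : H) (m : G), μ (l x m) = bh x (μ m)) ∧
    -- (b) d(l2(m,x)) = l2(dm,x)
    (∀ (x : H) (m : G), μ (r x m) = bh (μ m) x) ∧
    -- (c) l2(dm,n) = l2(m,dn)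
    (∀ m n : G, l (μ m) n = r (μ n) m) ∧
    -- (d) d(l3(x,y,z)) = l2(x,l2(y,z)) − l2(l2(x,y),z) − l2(y,l2(x,z)), l3 = 0
    (∀ x y z : H, (0 : H) = bh x (bh y z) - bh (bh x y) z - bh y (bh x z)) ∧
    -- (e1) l3(x,y,dm) = l2(x,l2(y,m)) − l2(l2(x,y),m) − l2(y,l2(x,m)), l3 = 0
    (∀ (x y : H) (m : G),
      (0 : G) = l x (l y m) - l (bh x y) m - l y (l x m)) ∧
    -- (e2) l3(x,dm,y) = l2(x,l2(m,y)) − l2(l2(x,m),y) − l2(m,l2(x,y)), l3 = 0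
    (∀ (x y : H) (m : G),
      (0 : G) = l x (r y m) - r y (l x m) - r (bh x y) m) ∧
    -- (e3) l3(dm,x,y) = l2(m,l2(x,y)) − l2(l2(m,x),y) − l2(x,l2(m,y)), l3 = 0
    (∀ (x y : H) (m : G),
      (0 : G) = r (bh x y) m - r y (r x m) - l x (r y m)) ∧
    -- (f) the Jacobiator identity with l3 = 0
    (∀ w x y z : H,
      l w (0 : G) - l x (0 : G) + l y (0 : G) + r z (0 : G)
        - (0 : G) - (0 : G) - (0 : G) + (0 : G) + (0 : G) - (0 : G) = 0) := by
  refine ⟨cm1, cm1', ?_, ?_, ?_, ?_, ?_, ?_⟩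
  · intro m n; rw [cm2, cm2']
  · intro x y z; rw [hhLeib x y z]; abel
  · intro x y m; rw [rep1]; abel
  · intro x y m; rw [rep2]; abel
  · intro x y m; rw [rep2, rep3]; abel
  · intro w x y z; simp
end

section
/- Let (g,[·,·]) be a Leibniz algebra over a field K, V a K-vector space, (l,r) a representation of g on V (bilinear actions with l_{[g1,g2]} = l_{g1}∘l_{g2} − l_{g2}∘l_{g1}, r_{[g1,g2]} = l_{g1}∘r_{g2} − r_{g2}∘l_{g1}, r_{g2}∘l_{g1} = −r_{g2}∘r_{g1}), and φ : g × g × g → V a trilinear map which is a Leibniz 3-cocycle, i.e. for all g1,g2,g3,g4 ∈ g: l_{g1}φ(g2,g3,g4) − l_{g2}φ(g1,g3,g4) + l_{g3}φ(g1,g2,g4) + r_{g4}φ(g1,g2,g3) − φ([g1,g2],g3,g4) − φ(g2,[g1,g3],g4) − φ(g2,g3,[g1,g4]) + φ(g1,[g2,g3],g4) + φ(g1,g3,[g2,g4]) − φ(g1,g2,[g3,g4]) = 0. Define V1 := V, V0 := g, d := 0, l2(x,y) := [x,y], l2(x,m) := l_x m, l2(m,x) := r_x m, and l3 := φ. Then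 all conditions (a)–(f) of a 2-term sh Leibniz algebra hold; in particular this data is a skeletal 2-term sh Leibniz algebra. -/
/-- Given a Leibniz algebra `g`, a representation `(l,r)` on `V`,
    and a Leibniz 3-cocycle `φ`, the data `V1 := V`, `V0 := g`, `d := 0`,
    `l2 := ([·,·], l, r)`, `l3 := φ` satisfies all conditions (a)–(f) of a
    2-term sh Leibniz algebra, i.e. is a skeletal 2-term sh Leibniz algebra. -/
theorem stmt6 {K G V : Type*} [Field K]
    [AddCommGroup G] [Module K G] [AddCommGroup V] [Module K V]
    (bg : G →ₗ[K] G →ₗ[K] G)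
    (hLeib : ∀ a b c : G, bg a (bg b c) = bg (bg a b) c + bg b (bg a c))
    (l r : G →ₗ[K] V →ₗ[K] V)
    (rep1 : ∀ (x y : G) (m : V), l (bg x y) m = l x (l y m) - l y (l x m))
    (rep2 : ∀ (x y : G) (m : V), r (bg x y) m = l x (r y m) - r y (l x m))
    (rep3 : ∀ (x y : G) (m : V), r y (l x m) = - r y (r x m))
    (φ : G →ₗ[K] G →ₗ[K] G →ₗ[K] V)
    (hcocycle : ∀ g1 g2 g3 g4 : G,
      l g1 (φ g2 g3 g4) - l g2 (φ g1 g3 g4) + l g3 (φ g1 g2 g4)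
        + r g4 (φ g1 g2 g3)
        - φ (bg g1 g2) g3 g4 - φ g2 (bg g1 g3) g4 - φ g2 g3 (bg g1 g4)
        + φ g1 (bg g2 g3) g4 + φ g1 g3 (bg g2 g4) - φ g1 g2 (bg g3 g4) = 0) :
    -- (a) d(l2(x,m)) = l2(x,dm) with d = 0
    (∀ (x : G) (m : V), (0 : V →ₗ[K] G) (l x m) = bg x ((0 : V →ₗ[K] G) m)) ∧
    -- (b) d(l2(m,x)) = l2(dm,x) with d = 0
    (∀ (x : G) (m : V), (0 : V →ₗ[K] G) (r x m) = bg ((0 : V →ₗ[K] G) m) x) ∧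
    -- (c) l2(dm,n) = l2(m,dn) with d = 0
    (∀ m n : V, l ((0 : V →ₗ[K] G) m) n = r ((0 : V →ₗ[K] G) n) m) ∧
    -- (d) d(l3(x,y,z)) = l2(x,l2(y,z)) − l2(l2(x,y),z) − l2(y,l2(x,z)), d = 0
    (∀ x y z : G,
      (0 : V →ₗ[K] G) (φ x y z)
        = bg x (bg y z) - bg (bg x y) z - bg y (bg x z)) ∧
    -- (e1) l3(x,y,dm) = l2(x,l2(y,m)) − l2(l2(x,y),m) − l2(y,l2(x,m)), d = 0
    (∀ (x y : G) (m : V),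
      φ x y ((0 : V →ₗ[K] G) m)
        = l x (l y m) - l (bg x y) m - l y (l x m)) ∧
    -- (e2) l3(x,dm,y) = l2(x,l2(m,y)) − l2(l2(x,m),y) − l2(m,l2(x,y)), d = 0
    (∀ (x y : G) (m : V),
      φ x ((0 : V →ₗ[K] G) m) y
        = l x (r y m) - r y (l x m) - r (bg x y) m) ∧
    -- (e3) l3(dm,x,y) = l2(m,l2(x,y)) − l2(l2(m,x),y) − l2(x,l2(m,y)), d = 0
    (∀ (x y : G) (m : V),
      φ ((0 : V →ₗ[K] G) m) x y
        = r (bg x y) m - r y (r x m) - l x (r y m)) ∧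
    -- (f) the Jacobiator identity for l3 = φ
    (∀ w x y z : G,
      l w (φ x y z) - l x (φ w y z) + l y (φ w x z) + r z (φ w x y)
        - φ (bg w x) y z - φ x (bg w y) z - φ x y (bg w z)
        + φ w (bg x y) z + φ w y (bg x z) - φ w x (bg y z) = 0) := by
  refine ⟨?_, ?_, ?_, ?_, ?_, ?_, ?_, ?_⟩
  · intro x m; simp
  · intro x m; simp
  · intro m n; simp
  · intro x y z; simp [hLeib x y z]
  · intro x y m; simp [rep1 x y m]
  · intro x y m; simp [rep2 x y m]
  · intro x y m
    simp only [LinearMap.zero_apply, map_zero, LinearMap.zero_apply,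
      rep2 x y m, rep3 x y m]
    abel
  · exact hcocycle
end

section
/- Let d : V1 → V0 be a linear map of K-vector spaces. Let End⁰_d(V) = {(A0,A1) ∈ End(V0) × End(V1) | A0∘d = d∘A1}, End¹(V) = Hom(V0,V1), δ(φ) = (d∘φ, φ∘d), with brackets [A,B] = (A0B0 − B0A0, A1B1 − B1A1) and [A,φ] = A1∘φ − φ∘A0 = −[φ,A]. Suppose given linear maps f0 : End⁰_d(V) → End⁰_d(V), f1 : End¹(V) → End¹(V) and a bilinear map f2 : End⁰_d(V) × End⁰_d(V) → End¹(V) such that: f0∘δ = δ∘f1; [f0(A),f0(B)] − f0([A,B]) = δ(f2(A,B)); [f0(A),f1(φ)] − f1([A,φ]) = f2(A,δφ); and [f1(φ),f0(A)] − f1([φ,A]) = f2(δφ,A), for all A,B ∈ End⁰_d(V), φ ∈ End¹(V). On the complex End¹(V) ⊕ V1 →(δ⊕d)→ End⁰_d(V) ⊕ V0 define l2^f(A+u,B+v) := [A,B] + f0(A)_0(v), l2^f(A+u,φ+m) := [A,φ] + f0(A)_1(m), l2^f(φ+m,A+u) := [φ,A] + f1(φ)(u), and l3^f(A+u,B+v,C+w)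 := f2(A,B)(w). Then conditions (a),(b),(c),(d),(e1),(e2),(e3) of a 2-term sh Leibniz algebra hold for (δ⊕d, l2^f, l3^f). -/
namespace Stmt8

variable {K V0 V1 : Type*} [Field K] [AddCommGroup V0] [Module K V0]
  [AddCommGroup V1] [Module K V1]

/-- `End⁰_d(V) = {(A0,A1) ∈ End(V0) × End(V1) | A0 ∘ d = d ∘ A1}`. -/
def End0d (d : V1 →ₗ[K] V0) : Submodule K ((V0 →ₗ[K] V0) × (V1 →ₗ[K] V1)) where
  carrier := {A | A.1 ∘ₗ d = d ∘ₗ A.2}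
  add_mem' := by
    intro A B hA hB
    simp only [Set.mem_setOf_eq] at hA hB ⊢
    have hA' : ∀ w, A.1 (d w) = d (A.2 w) := fun w => LinearMap.congr_fun hA w
    have hB' : ∀ w, B.1 (d w) = d (B.2 w) := fun w => LinearMap.congr_fun hB w
    ext v
    simp [hA', hB']
  zero_mem' := by
    simp only [Set.mem_setOf_eq]
    ext v
    simp
  smul_mem' := by
    intro c A hA
    simp only [Set.mem_setOf_eq] at hA ⊢
    have hA' : ∀ w, A.1 (d w) = d (A.2 w) := fun w => LinearMap.congr_fun hA w
    ext v
    simp [hA']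

theorem mem_End0d {d : V1 →ₗ[K] V0} {A : (V0 →ₗ[K] V0) × (V1 →ₗ[K] V1)} :
    A ∈ End0d d ↔ A.1 ∘ₗ d = d ∘ₗ A.2 := Iff.rfl

/-- The differential `δ(φ) = (d ∘ φ, φ ∘ d)`. -/
def delta0 (d : V1 →ₗ[K] V0) (φ : V0 →ₗ[K] V1) : End0d d :=
  ⟨(d ∘ₗ φ, φ ∘ₗ d), by rw [mem_End0d]; ext v; simp⟩

/-- The graded commutator `[A,B]` on `End⁰_d(V)`. -/
def bkt0 {d : V1 →ₗ[K] V0} (A B : End0d d) : End0d d :=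
  ⟨(A.val.1 ∘ₗ B.val.1 - B.val.1 ∘ₗ A.val.1,
    A.val.2 ∘ₗ B.val.2 - B.val.2 ∘ₗ A.val.2), by
    rw [mem_End0d]
    have hA : ∀ w, A.val.1 (d w) = d (A.val.2 w) :=
      fun w => LinearMap.congr_fun (mem_End0d.mp A.property) w
    have hB : ∀ w, B.val.1 (d w) = d (B.val.2 w) :=
      fun w => LinearMap.congr_fun (mem_End0d.mp B.property) w
    ext v
    simp [hA, hB]⟩

/-- The mixed bracket `[A,φ] = A1 ∘ φ − φ ∘ A0`. -/
def bktAp {d : V1 →ₗ[K] V0} (A : End0d d) (φ : V0 →ₗ[K] V1) : V0 →ₗ[K] V1 :=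
  A.val.2 ∘ₗ φ - φ ∘ₗ A.val.1

/-- The mixed bracket `[φ,A] = φ ∘ A0 − A1 ∘ φ`. -/
def bktpA {d : V1 →ₗ[K] V0} (φ : V0 →ₗ[K] V1) (A : End0d d) : V0 →ₗ[K] V1 :=
  φ ∘ₗ A.val.1 - A.val.2 ∘ₗ φ

/-- The differential `δ ⊕ d` of the complex `End¹(V) ⊕ V1 → End⁰_d(V) ⊕ V0`. -/
def Dmap (d : V1 →ₗ[K] V0) (m : (V0 →ₗ[K] V1) × V1) : End0d d × V0 :=
  (delta0 d m.1, d m.2)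

/-- `l2^f` in degree 0: `l2^f(A+u, B+v) = [A,B] + f0(A)_0(v)`. -/
def L00 {d : V1 →ₗ[K] V0} (f0 : End0d d →ₗ[K] End0d d)
    (x y : End0d d × V0) : End0d d × V0 :=
  (bkt0 x.1 y.1, (f0 x.1).val.1 y.2)

/-- `l2^f` in degree (0,1): `l2^f(A+u, φ+m) = [A,φ] + f0(A)_1(m)`. -/
def L01 {d : V1 →ₗ[K] V0} (f0 : End0d d →ₗ[K] End0d d)
    (x : End0d d × V0) (m : (V0 →ₗ[K] V1) × V1) : (V0 →ₗ[K] V1) × V1 :=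
  (bktAp x.1 m.1, (f0 x.1).val.2 m.2)

/-- `l2^f` in degree (1,0): `l2^f(φ+m, A+u) = [φ,A] + f1(φ)(u)`. -/
def L10 {d : V1 →ₗ[K] V0} (f1 : (V0 →ₗ[K] V1) →ₗ[K] (V0 →ₗ[K] V1))
    (m : (V0 →ₗ[K] V1) × V1) (x : End0d d × V0) : (V0 →ₗ[K] V1) × V1 :=
  (bktpA m.1 x.1, f1 m.1 x.2)

/-- `l3^f(A+u, B+v, C+w) = f2(A,B)(w)`. -/
def L3 {d : V1 →ₗ[K] V0}
    (f2 : End0d d →ₗ[K] End0d d →ₗ[K] (V0 →ₗ[K] V1))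
    (x y z : End0d d × V0) : (V0 →ₗ[K] V1) × V1 :=
  (0, f2 x.1 y.1 z.2)

end Stmt8

set_option maxHeartbeats 2000000 in
open Stmt8 in
/-- given `(f0,f1,f2)` satisfying the morphism conditions for the
    2-term DGLA `End(V)`, the data `(δ⊕d, l2^f, l3^f)` on
    `End¹(V) ⊕ V1 → End⁰_d(V) ⊕ V0` satisfies conditions
    (a),(b),(c),(d),(e1),(e2),(e3) of a 2-term sh Leibniz algebra. -/
theorem stmt8 {K V0 V1 : Type*} [Field K] [AddCommGroup V0] [Module K V0]
    [AddCommGroup V1] [Module K V1]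
    (d : V1 →ₗ[K] V0)
    (f0 : End0d d →ₗ[K] End0d d)
    (f1 : (V0 →ₗ[K] V1) →ₗ[K] (V0 →ₗ[K] V1))
    (f2 : End0d d →ₗ[K] End0d d →ₗ[K] (V0 →ₗ[K] V1))
    (hf01 : ∀ φ : V0 →ₗ[K] V1, f0 (delta0 d φ) = delta0 d (f1 φ))
    (hf2a : ∀ A B : End0d d,
      bkt0 (f0 A) (f0 B) - f0 (bkt0 A B) = delta0 d (f2 A B))
    (hf2b : ∀ (A : End0d d) (φ : V0 →ₗ[K] V1),
      bktAp (f0 A) (f1 φ) - f1 (bktAp A φ) = f2 A (delta0 d φ))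
    (hf2c : ∀ (A : End0d d) (φ : V0 →ₗ[K] V1),
      bktpA (f1 φ) (f0 A) - f1 (bktpA φ A) = f2 (delta0 d φ) A) :
    -- (a)
    (∀ (x : End0d d × V0) (m : (V0 →ₗ[K] V1) × V1),
      Dmap d (L01 f0 x m) = L00 f0 x (Dmap d m)) ∧
    -- (b)
    (∀ (x : End0d d × V0) (m : (V0 →ₗ[K] V1) × V1),
      Dmap d (L10 f1 m x) = L00 f0 (Dmap d m) x) ∧
    -- (c)
    (∀ m n : (V0 →ₗ[K] V1) × V1,
      L01 f0 (Dmap d m) n = L10 f1 m (Dmap d n)) ∧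
    -- (d)
    (∀ x y z : End0d d × V0,
      Dmap d (L3 f2 x y z)
        = L00 f0 x (L00 f0 y z) - L00 f0 (L00 f0 x y) z
          - L00 f0 y (L00 f0 x z)) ∧
    -- (e1)
    (∀ (x y : End0d d × V0) (m : (V0 →ₗ[K] V1) × V1),
      L3 f2 x y (Dmap d m)
        = L01 f0 x (L01 f0 y m) - L01 f0 (L00 f0 x y) m
          - L01 f0 y (L01 f0 x m)) ∧
    -- (e2)
    (∀ (x y : End0d d × V0) (m : (V0 →ₗ[K] V1) × V1),
      L3 f2 x (Dmap d m) y
        = L01 f0 x (L10 f1 m y) - L10 f1 (L01 f0 x m) y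
          - L10 f1 m (L00 f0 x y)) ∧
    -- (e3)
    (∀ (x y : End0d d × V0) (m : (V0 →ₗ[K] V1) × V1),
      L3 f2 (Dmap d m) x y
        = L10 f1 m (L00 f0 x y) - L10 f1 (L10 f1 m x) y
          - L01 f0 x (L10 f1 m y)) := by

  have hcomm : ∀ (A : End0d d) (w : V1), A.val.1 (d w) = d (A.val.2 w) :=
    fun A w => LinearMap.congr_fun (mem_End0d.mp A.property) w
  refine ⟨?_, ?_, ?_, ?_, ?_, ?_, ?_⟩
  · -- (a)
    intro x m
    refine Prod.ext (Subtype.ext (Prod.ext ?_ ?_)) ?_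
    · ext v
      simp [Dmap, L01, L00, delta0, bkt0, bktAp, hcomm]
    · ext v
      simp [Dmap, L01, L00, delta0, bkt0, bktAp, hcomm]
    · simpa [Dmap, L01, L00] using (hcomm (f0 x.1) m.2).symm
  · -- (b)
    intro x m
    refine Prod.ext (Subtype.ext (Prod.ext ?_ ?_)) ?_
    · ext v
      simp [Dmap, L10, L00, delta0, bkt0, bktpA, hcomm]
    · ext v
      simp [Dmap, L10, L00, delta0, bkt0, bktpA, hcomm]
    · have := congrArg (fun (A : End0d d) => A.val.1 x.2) (hf01 m.1)
      simpa [Dmap, L10, L00, delta0] using this.symm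
  · -- (c)
    intro m n
    refine Prod.ext ?_ ?_
    · ext v
      simp [Dmap, L01, L10, delta0, bktAp, bktpA]
    · have := congrArg (fun (A : End0d d) => A.val.2 n.2) (hf01 m.1)
      simpa [Dmap, L01, L10, delta0] using this
  · -- (d)
    intro x y z
    have h := hf2a x.1 y.1
    refine Prod.ext (Subtype.ext (Prod.ext ?_ ?_)) ?_
    · ext v
      simp [Dmap, L3, L00, delta0, bkt0]
      abel
    · ext v
      simp [Dmap, L3, L00, delta0, bkt0]
      abel
    · have hv : (f0 x.1).val.1 ((f0 y.1).val.1 z.2)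
          - (f0 y.1).val.1 ((f0 x.1).val.1 z.2)
          - (f0 (bkt0 x.1 y.1)).val.1 z.2 = d (f2 x.1 y.1 z.2) :=
        congrArg (fun (A : End0d d) => A.val.1 z.2) h
      show d (f2 x.1 y.1 z.2)
          = (f0 x.1).val.1 ((f0 y.1).val.1 z.2)
            - (f0 (bkt0 x.1 y.1)).val.1 z.2
            - (f0 y.1).val.1 ((f0 x.1).val.1 z.2)
      rw [← hv]; abel
  · -- (e1)
    intro x y m
    have h := hf2a x.1 y.1
    refine Prod.ext ?_ ?_
    · ext v
      simp [Dmap, L3, L01, L00, bktAp, bkt0]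
      abel
    · have hv : (f0 x.1).val.2 ((f0 y.1).val.2 m.2)
          - (f0 y.1).val.2 ((f0 x.1).val.2 m.2)
          - (f0 (bkt0 x.1 y.1)).val.2 m.2 = f2 x.1 y.1 (d m.2) :=
        congrArg (fun (A : End0d d) => A.val.2 m.2) h
      show f2 x.1 y.1 (d m.2)
          = (f0 x.1).val.2 ((f0 y.1).val.2 m.2)
            - (f0 (bkt0 x.1 y.1)).val.2 m.2
            - (f0 y.1).val.2 ((f0 x.1).val.2 m.2)
      rw [← hv]; abel
  · -- (e2)
    intro x y m
    have h := hf2b x.1 m.1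
    refine Prod.ext ?_ ?_
    · ext v
      simp [Dmap, L3, L01, L10, L00, bktAp, bktpA, bkt0]
      abel
    · have hv : (f0 x.1).val.2 (f1 m.1 y.2) - f1 m.1 ((f0 x.1).val.1 y.2)
          - f1 (bktAp x.1 m.1) y.2 = f2 x.1 (delta0 d m.1) y.2 :=
        congrArg (fun (ψ : V0 →ₗ[K] V1) => ψ y.2) h
      show f2 x.1 (delta0 d m.1) y.2
          = (f0 x.1).val.2 (f1 m.1 y.2) - f1 (bktAp x.1 m.1) y.2
            - f1 m.1 ((f0 x.1).val.1 y.2)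
      rw [← hv]; abel
  · -- (e3)
    intro x y m
    have h := hf2c x.1 m.1
    refine Prod.ext ?_ ?_
    · ext v
      simp [Dmap, L3, L01, L10, L00, bktAp, bktpA, bkt0]
      abel
    · have hv : f1 m.1 ((f0 x.1).val.1 y.2) - (f0 x.1).val.2 (f1 m.1 y.2)
          - f1 (bktpA m.1 x.1) y.2 = f2 (delta0 d m.1) x.1 y.2 :=
        congrArg (fun (ψ : V0 →ₗ[K] V1) => ψ y.2) h
      show f2 (delta0 d m.1) x.1 y.2
          = f1 m.1 ((f0 x.1).val.1 y.2) - f1 (bktpA m.1 x.1) y.2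
            - (f0 x.1).val.2 (f1 m.1 y.2)
      rw [← hv]; abel
end

section
/- Let C be a commutative ring, E a C-module, ⟨·,·⟩ : E × E → C a symmetric C-bilinear nondegenerate pairing (⟨x,e⟩ = 0 for all e implies x = 0), ρ a map assigning to each e ∈ E a derivation ρ(e) : C → C, ⟦·,·⟧ : E × E → E a biadditive bracket satisfying the invariance axiom ρ(e1)⟨e2,e3⟩ = ⟨⟦e1,e2⟧,e3⟩ + ⟨e2,⟦e1,e3⟧⟩, and D : C → E an additive map with D(fg) = f•D(g) + g•D(f) and ⟦e1,e2⟧ + ⟦e2,e1⟧ = D⟨e1,e2⟩ for all f,g ∈ C, e1,e2 ∈ E. Then for all e1,e2 ∈ E and f ∈ C: ⟦f•e2, e1⟧ = f•⟦e2,e1⟧ − (ρ(e1)(f))•e2 + ⟨e1,e2⟩•D(f). -/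
/-- in an algebraic model of a twisted Courant algebroid, the
    second anchored Leibniz rule holds:
    `⟦f•e2, e1⟧ = f•⟦e2,e1⟧ − (ρ(e1)f)•e2 + ⟨e1,e2⟩•D(f)`. -/
theorem stmt12 {C E : Type*} [CommRing C] [AddCommGroup E] [Module C E]
    (pair : E →ₗ[C] E →ₗ[C] C)
    (hsymm : ∀ a b : E, pair a b = pair b a)
    (hnd : ∀ x : E, (∀ e : E, pair x e = 0) → x = 0)
    (ρ : E → C → C)
    (hρadd : ∀ (e : E) (f g : C), ρ e (f + g) = ρ e f + ρ e g)
    (hρder : ∀ (e : E) (f g : C), ρ e (f * g) = f * ρ e g + g * ρ e f)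
    (br : E → E → E)
    (hbrl : ∀ a b c : E, br (a + b) c = br a c + br b c)
    (hbrr : ∀ a b c : E, br a (b + c) = br a b + br a c)
    (hinv : ∀ e1 e2 e3 : E,
      ρ e1 (pair e2 e3) = pair (br e1 e2) e3 + pair e2 (br e1 e3))
    (D : C → E)
    (hDadd : ∀ f g : C, D (f + g) = D f + D g)
    (hDleib : ∀ f g : C, D (f * g) = f • D g + g • D f)
    (hsym : ∀ e1 e2 : E, br e1 e2 + br e2 e1 = D (pair e1 e2)) :
    ∀ (e1 e2 : E) (f : C),
      br (f • e2) e1 = f • br e2 e1 - ρ e1 f • e2 + pair e1 e2 • D f := by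
  -- first Leibniz rule
  have hleib : ∀ (e1 e2 : E) (f : C),
      br e1 (f • e2) = f • br e1 e2 + ρ e1 f • e2 := by
    intro e1 e2 f
    have key : ∀ e3 : E,
        pair (br e1 (f • e2) - (f • br e1 e2 + ρ e1 f • e2)) e3 = 0 := by
      intro e3
      have h1 := hinv e1 (f • e2) e3
      have h2 := hinv e1 e2 e3
      have hl : pair ((f : C) • e2) e3 = f * pair e2 e3 := by simp
      have hl2 : pair ((f : C) • e2) (br e1 e3) = f * pair e2 (br e1 e3) := by simp
      rw [hl, hρder, h2, hl2] at h1
      simp only [map_sub, map_add, LinearMap.sub_apply, LinearMap.add_apply,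
        map_smul, LinearMap.smul_apply, smul_eq_mul]
      linear_combination -h1
    have := hnd _ key
    have h := sub_eq_zero.mp this
    linear_combination (norm := abel) h
  intro e1 e2 f
  have hs1 := hsym e1 (f • e2)
  have hp : pair e1 ((f : C) • e2) = f * pair e1 e2 := by simp
  have hs2 := hsym e1 e2
  have hL := hleib e1 e2 f
  -- br (f•e2) e1 = D (pair e1 (f•e2)) - br e1 (f•e2)
  have e1' : br ((f : C) • e2) e1 = D (f * pair e1 e2) - br e1 (f • e2) := by
    rw [← hp, ← hs1]; abel
  rw [e1', hDleib, hL]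
  have hD : D (pair e1 e2) = br e1 e2 + br e2 e1 := (hsym e1 e2).symm
  rw [hD, smul_add]
  abel
end

section
/- Let C be a commutative ring, E a C-module, ⟨·,·⟩ : E × E → C a symmetric C-bilinear nondegenerate pairing (⟨x,e⟩ = 0 for all e implies x = 0), ρ a map assigning to each e ∈ E a derivation ρ(e) : C → C, and ⟦·,·⟧ : E × E → E a biadditive bracket satisfying the invariance axiom ρ(e1)⟨e2,e3⟩ = ⟨⟦e1,e2⟧,e3⟩ + ⟨e2,⟦e1,e3⟧⟩. Define the Jacobiator J(e1,e2,e3) := ⟦e1,⟦e2,e3⟧⟧ − ⟦⟦e1,e2⟧,e3⟧ − ⟦e2,⟦e1,e3⟧⟧. Then for all e1,e2,e3 ∈ E and f ∈ C: J(e1,e2,f•e3) = f•J(e1,e2,e3) + (ρ(e1)(ρ(e2)(f)) − ρ(e2)(ρ(e1)(f)) − ρ(⟦e1,e2⟧)(f))•e3. -/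
/-- in an algebraic model of a twisted Courant algebroid, the
    Jacobiator `J(e1,e2,e3) = ⟦e1,⟦e2,e3⟧⟧ − ⟦⟦e1,e2⟧,e3⟧ − ⟦e2,⟦e1,e3⟧⟧`
    satisfies `J(e1,e2,f•e3) = f•J(e1,e2,e3)
    + (ρ(e1)(ρ(e2)f) − ρ(e2)(ρ(e1)f) − ρ(⟦e1,e2⟧)f)•e3`. -/
theorem stmt13 {C E : Type*} [CommRing C] [AddCommGroup E] [Module C E]
    (pair : E →ₗ[C] E →ₗ[C] C)
    (hsymm : ∀ a b : E, pair a b = pair b a)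
    (hnd : ∀ x : E, (∀ e : E, pair x e = 0) → x = 0)
    (ρ : E → C → C)
    (hρadd : ∀ (e : E) (f g : C), ρ e (f + g) = ρ e f + ρ e g)
    (hρder : ∀ (e : E) (f g : C), ρ e (f * g) = f * ρ e g + g * ρ e f)
    (br : E → E → E)
    (hbrl : ∀ a b c : E, br (a + b) c = br a c + br b c)
    (hbrr : ∀ a b c : E, br a (b + c) = br a b + br a c)
    (hinv : ∀ e1 e2 e3 : E,
      ρ e1 (pair e2 e3) = pair (br e1 e2) e3 + pair e2 (br e1 e3)) :
    ∀ (e1 e2 e3 : E) (f : C),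
      br e1 (br e2 (f • e3)) - br (br e1 e2) (f • e3) - br e2 (br e1 (f • e3))
        = f • (br e1 (br e2 e3) - br (br e1 e2) e3 - br e2 (br e1 e3))
          + (ρ e1 (ρ e2 f) - ρ e2 (ρ e1 f) - ρ (br e1 e2) f) • e3 := by
  have leib : ∀ (e x : E) (f : C), br e (f • x) = f • br e x + ρ e f • x := by
    intro e x f
    have h : br e (f • x) - (f • br e x + ρ e f • x) = 0 := by
      apply hnd
      intro y
      have h1 := hinv e (f • x) y
      have h2 : (pair (f • x)) y = f * pair x y := by
        simp [LinearMap.map_smul, smul_eq_mul]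
      rw [h2, hρder] at h1
      have h3 := hinv e x y
      simp only [map_sub, map_add, LinearMap.sub_apply, LinearMap.add_apply,
        LinearMap.map_smul, LinearMap.smul_apply, smul_eq_mul]
      have h4 : (pair (br e (f • x))) y
          = f * ρ e (pair x y) + (pair x) y * ρ e f - f * (pair x) (br e y) := by
        have : (pair (f • x)) (br e y) = f * pair x (br e y) := by
          simp [LinearMap.map_smul, smul_eq_mul]
        rw [this] at h1; linear_combination -h1
      rw [h4, h3]; ring
    exact sub_eq_zero.mp h
  intro e1 e2 e3 f
  rw [leib e2 e3 f, hbrr, leib e1 (br e2 e3) f, leib e1 e3 (ρ e2 f),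
    leib (br e1 e2) e3 f, leib e1 e3 f, hbrr, leib e2 (br e1 e3) f,
    leib e2 e3 (ρ e1 f)]
  simp only [smul_sub, sub_smul, smul_add, smul_smul]
  module
end

section
/- Let C be a commutative ring, E a faithful C-module (if f•e = 0 for all e ∈ E then f = 0), ⟨·,·⟩ : E × E → C a symmetric C-bilinear nondegenerate pairing, ρ a map assigning to each e ∈ E a derivation ρ(e) : C → C, and ⟦·,·⟧ : E × E → E a biadditive bracket satisfying the invariance axiom ρ(e1)⟨e2,e3⟩ = ⟨⟦e1,e2⟧,e3⟩ + ⟨e2,⟦e1,e3⟧⟩. Assume the Jacobiator J(e1,e2,e3) := ⟦e1,⟦e2,e3⟧⟧ − ⟦⟦e1,e2⟧,e3⟧ − ⟦e2,⟦e1,e3⟧⟧ is C-linear in its third argument: J(e1,e2,f•e3) = f•J(e1,e2,e3) for all f ∈ C. Then the anchor is a morphism to vector fields: for all e1,e2 ∈ E and f ∈ C, ρ(⟦e1,e2⟧)(f) = ρ(e1)(ρ(e2)(f)) − ρ(e2)(ρ(e1)(f)). -/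
/-- if `E` is a faithful module and the Jacobiator of the
    bracket is `C`-linear in its third argument, then the anchor is a morphism
    to vector fields: `ρ(⟦e1,e2⟧)f = ρ(e1)(ρ(e2)f) − ρ(e2)(ρ(e1)f)`. -/
theorem stmt14 {C E : Type*} [CommRing C] [AddCommGroup E] [Module C E]
    (hfaith : ∀ f : C, (∀ e : E, f • e = 0) → f = 0)
    (pair : E →ₗ[C] E →ₗ[C] C)
    (hsymm : ∀ a b : E, pair a b = pair b a)
    (hnd : ∀ x : E, (∀ e : E, pair x e = 0) → x = 0)
    (ρ : E → C → C)
    (hρadd : ∀ (e : E) (f g : C), ρ e (f + g) = ρ e f + ρ e g)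
    (hρder : ∀ (e : E) (f g : C), ρ e (f * g) = f * ρ e g + g * ρ e f)
    (br : E → E → E)
    (hbrl : ∀ a b c : E, br (a + b) c = br a c + br b c)
    (hbrr : ∀ a b c : E, br a (b + c) = br a b + br a c)
    (hinv : ∀ e1 e2 e3 : E,
      ρ e1 (pair e2 e3) = pair (br e1 e2) e3 + pair e2 (br e1 e3))
    (hJlin : ∀ (e1 e2 e3 : E) (f : C),
      br e1 (br e2 (f • e3)) - br (br e1 e2) (f • e3) - br e2 (br e1 (f • e3))
        = f • (br e1 (br e2 e3) - br (br e1 e2) e3 - br e2 (br e1 e3))) :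
    ∀ (e1 e2 : E) (f : C),
      ρ (br e1 e2) f = ρ e1 (ρ e2 f) - ρ e2 (ρ e1 f) := by
  -- Leibniz rule for the bracket in its second slot
  have leib : ∀ (e x : E) (f : C), br e (f • x) = f • br e x + ρ e f • x := by
    intro e x f
    have h : ∀ y : E, pair (br e (f • x) - (f • br e x + ρ e f • x)) y = 0 := by
      intro y
      have h1 := hinv e (f • x) y
      have h2 := hinv e x y
      simp only [map_smul, LinearMap.smul_apply, smul_eq_mul] at h1
      rw [hρder] at h1
      simp only [map_sub, map_add, map_smul, LinearMap.sub_apply,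
        LinearMap.add_apply, LinearMap.smul_apply, smul_eq_mul]
      linear_combination f * h2 - h1
    exact sub_eq_zero.mp (hnd _ h)
  intro e1 e2 f
  have key : ∀ e3 : E,
      (ρ e1 (ρ e2 f) - ρ e2 (ρ e1 f) - ρ (br e1 e2) f) • e3 = 0 := by
    intro e3
    have h := hJlin e1 e2 e3 f
    simp only [leib, hbrr] at h
    rw [sub_smul, sub_smul]
    linear_combination (norm := module) h
  have h0 := hfaith _ key
  linear_combination -h0
end

section
/- Let C be a commutative ring, E a faithful C-module, ⟨·,·⟩ : E × E → C a symmetric C-bilinear nondegenerate pairing, ρ a C-linear map assigning to each e ∈ E a derivation ρ(e) : C → C (with ρ(f•e)(g) = f·ρ(e)(g)), ⟦·,·⟧ : E × E → E a biadditive bracket satisfying the invariance axiom ρ(e1)⟨e2,e3⟩ = ⟨⟦e1,e2⟧,e3⟩ + ⟨e2,⟦e1,e3⟧⟩ and whose Jacobiator J(e1,e2,e3) = ⟦e1,⟦e2,e3⟧⟧ − ⟦⟦e1,e2⟧,e3⟧ − ⟦e2,⟦e1,e3⟧⟧ is C-linear in its third argument, and D : C → E an additive map with ⟨D(f),e⟩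 = ρ(e)(f), D(fg) = f•D(g) + g•D(f), and ⟦e1,e2⟧ + ⟦e2,e1⟧ = D⟨e1,e2⟩. Then for all e ∈ E and f ∈ C: ⟦D(f), e⟧ = 0 and ⟦e, D(f)⟧ = D(ρ(e)(f)). -/
/-- in an algebraic model of a twisted Courant algebroid with
    `D = ρ*∘d`, one has `⟦D(f), e⟧ = 0` and `⟦e, D(f)⟧ = D(ρ(e)f)`. -/
theorem stmt16 {C E : Type*} [CommRing C] [AddCommGroup E] [Module C E]
    (hfaith : ∀ f : C, (∀ e : E, f • e = 0) → f = 0)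
    (pair : E →ₗ[C] E →ₗ[C] C)
    (hsymm : ∀ a b : E, pair a b = pair b a)
    (hnd : ∀ x : E, (∀ e : E, pair x e = 0) → x = 0)
    (ρ : E → C → C)
    (hρadd : ∀ (e : E) (f g : C), ρ e (f + g) = ρ e f + ρ e g)
    (hρder : ∀ (e : E) (f g : C), ρ e (f * g) = f * ρ e g + g * ρ e f)
    (hρaddE : ∀ (e e' : E) (g : C), ρ (e + e') g = ρ e g + ρ e' g)
    (hρsmulE : ∀ (f : C) (e : E) (g : C), ρ (f • e) g = f * ρ e g)
    (br : E → E → E)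
    (hbrl : ∀ a b c : E, br (a + b) c = br a c + br b c)
    (hbrr : ∀ a b c : E, br a (b + c) = br a b + br a c)
    (hinv : ∀ e1 e2 e3 : E,
      ρ e1 (pair e2 e3) = pair (br e1 e2) e3 + pair e2 (br e1 e3))
    (hJlin : ∀ (e1 e2 e3 : E) (f : C),
      br e1 (br e2 (f • e3)) - br (br e1 e2) (f • e3) - br e2 (br e1 (f • e3))
        = f • (br e1 (br e2 e3) - br (br e1 e2) e3 - br e2 (br e1 e3)))
    (D : C → E)
    (hDadd : ∀ f g : C, D (f + g) = D f + D g)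
    (hDpair : ∀ (f : C) (e : E), pair (D f) e = ρ e f)
    (hDleib : ∀ f g : C, D (f * g) = f • D g + g • D f)
    (hsym : ∀ e1 e2 : E, br e1 e2 + br e2 e1 = D (pair e1 e2)) :
    (∀ (e : E) (f : C), br (D f) e = 0) ∧
    (∀ (e : E) (f : C), br e (D f) = D (ρ e f)) := by
  -- Leibniz rule for the bracket in its second argument
  have hL : ∀ (e1 e2 : E) (f : C),
      br e1 (f • e2) = f • br e1 e2 + (ρ e1 f) • e2 := by
    intro e1 e2 f
    have key : ∀ e3 : E,
        pair (br e1 (f • e2) - (f • br e1 e2 + (ρ e1 f) • e2)) e3 = 0 := by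
      intro e3
      have h1 := hinv e1 (f • e2) e3
      have h2 := hinv e1 e2 e3
      have h3 := hρder e1 f (pair e2 e3)
      simp only [map_smul, map_sub, map_add, LinearMap.sub_apply,
        LinearMap.add_apply, LinearMap.smul_apply, smul_eq_mul] at h1 h2 ⊢
      linear_combination h3 - h1 + f * h2
    have := hnd _ key
    rw [sub_eq_zero] at this
    exact this
  -- The anchor property
  have hanchor : ∀ (e1 e2 : E) (f : C),
      ρ (br e1 e2) f = ρ e1 (ρ e2 f) - ρ e2 (ρ e1 f) := by
    intro e1 e2 f
    have key : ∀ e3 : E,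
        (ρ (br e1 e2) f - (ρ e1 (ρ e2 f) - ρ e2 (ρ e1 f))) • e3 = 0 := by
      intro e3
      have hJ := hJlin e1 e2 e3 f
      rw [hL e2 e3 f, hbrr, hL e1 (br e2 e3) f, hL e1 e3 (ρ e2 f),
        hL (br e1 e2) e3 f, hL e1 e3 f, hbrr, hL e2 (br e1 e3) f,
        hL e2 e3 (ρ e1 f)] at hJ
      linear_combination (norm := module) -hJ
    have := hfaith _ key
    rw [sub_eq_zero] at this
    exact this
  have h2nd : ∀ (e : E) (f : C), br e (D f) = D (ρ e f) := by
    intro e f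
    have key : ∀ e' : E, pair (br e (D f) - D (ρ e f)) e' = 0 := by
      intro e'
      have h1 := hinv e (D f) e'
      rw [hDpair f e', hDpair f (br e e'), hanchor e e' f] at h1
      have h2 := hDpair (ρ e f) e'
      simp only [map_sub, LinearMap.sub_apply]
      linear_combination -h1 - h2
    have := hnd _ key
    rw [sub_eq_zero] at this
    exact this
  refine ⟨?_, h2nd⟩
  intro e f
  have h := hsym (D f) e
  rw [h2nd e f, hDpair f e] at h
  exact add_right_cancel (h.trans (zero_add (D (ρ e f))).symm)
end

section
/- Let C be a commutative ring, E a faithful C-module, ⟨·,·⟩ : E × E → C a symmetric C-bilinear nondegenerate pairing, ρ a C-linear map assigning to each e ∈ E a derivation ρ(e) : C → C (with ρ(f•e)(g) = f·ρ(e)(g)), ⟦·,·⟧ : E × E → E a biadditive bracket satisfying the invariance axiom ρ(e1)⟨e2,e3⟩ = ⟨⟦e1,e2⟧,e3⟩ + ⟨e2,⟦e1,e3⟧⟩ and whose Jacobiator J(e1,e2,e3) = ⟦e1,⟦e2,e3⟧⟧ − ⟦⟦e1,e2⟧,e3⟧ − ⟦e2,⟦e1,e3⟧⟧ is C-linear in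 its third argument, and D : C → E an additive map with ⟨D(f),e⟩ = ρ(e)(f), D(fg) = f•D(g) + g•D(f), and ⟦e1,e2⟧ + ⟦e2,e1⟧ = D⟨e1,e2⟩. Then for all e ∈ E and f,g ∈ C: ⟦f•D(g), e⟧ = −(ρ(e)(f))•D(g) + (ρ(e)(g))•D(f), and ⟦e, f•D(g)⟧ = f•D(ρ(e)(g)) + (ρ(e)(f))•D(g). -/
/-- in an algebraic model of a twisted Courant algebroid with
    `D = ρ*∘d` (so `f•D(g)` plays the role of `ρ*(f dg)`), one has
    `⟦f•D(g), e⟧ = −(ρ(e)f)•D(g) + (ρ(e)g)•D(f)` and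
    `⟦e, f•D(g)⟧ = f•D(ρ(e)g) + (ρ(e)f)•D(g)`. -/
theorem stmt17 {C E : Type*} [CommRing C] [AddCommGroup E] [Module C E]
    (hfaith : ∀ f : C, (∀ e : E, f • e = 0) → f = 0)
    (pair : E →ₗ[C] E →ₗ[C] C)
    (hsymm : ∀ a b : E, pair a b = pair b a)
    (hnd : ∀ x : E, (∀ e : E, pair x e = 0) → x = 0)
    (ρ : E → C → C)
    (hρadd : ∀ (e : E) (f g : C), ρ e (f + g) = ρ e f + ρ e g)
    (hρder : ∀ (e : E) (f g : C), ρ e (f * g) = f * ρ e g + g * ρ e f)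
    (hρaddE : ∀ (e e' : E) (g : C), ρ (e + e') g = ρ e g + ρ e' g)
    (hρsmulE : ∀ (f : C) (e : E) (g : C), ρ (f • e) g = f * ρ e g)
    (br : E → E → E)
    (hbrl : ∀ a b c : E, br (a + b) c = br a c + br b c)
    (hbrr : ∀ a b c : E, br a (b + c) = br a b + br a c)
    (hinv : ∀ e1 e2 e3 : E,
      ρ e1 (pair e2 e3) = pair (br e1 e2) e3 + pair e2 (br e1 e3))
    (hJlin : ∀ (e1 e2 e3 : E) (f : C),
      br e1 (br e2 (f • e3)) - br (br e1 e2) (f • e3) - br e2 (br e1 (f • e3))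
        = f • (br e1 (br e2 e3) - br (br e1 e2) e3 - br e2 (br e1 e3)))
    (D : C → E)
    (hDadd : ∀ f g : C, D (f + g) = D f + D g)
    (hDpair : ∀ (f : C) (e : E), pair (D f) e = ρ e f)
    (hDleib : ∀ f g : C, D (f * g) = f • D g + g • D f)
    (hsym : ∀ e1 e2 : E, br e1 e2 + br e2 e1 = D (pair e1 e2)) :
    (∀ (e : E) (f g : C),
      br (f • D g) e = -(ρ e f • D g) + ρ e g • D f) ∧
    (∀ (e : E) (f g : C),
      br e (f • D g) = f • D (ρ e g) + ρ e f • D g) := by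

  -- `K e1 e2 f = 0` : the anchor intertwines the bracket with the commutator.
  have hK : ∀ (e1 e2 : E) (f : C),
      ρ e1 (ρ e2 f) - ρ e2 (ρ e1 f) - ρ (br e1 e2) f = 0 := by
    intro e1 e2 f
    have stepA : ∀ e3 e4 : E,
        ρ e1 (ρ e2 (pair e3 e4)) - ρ e2 (ρ e1 (pair e3 e4))
          - ρ (br e1 e2) (pair e3 e4)
        = pair (br e1 (br e2 e3) - br (br e1 e2) e3 - br e2 (br e1 e3)) e4
          + pair e3 (br e1 (br e2 e4) - br (br e1 e2) e4 - br e2 (br e1 e4)) := by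
      intro e3 e4
      rw [hinv e2 e3 e4, hρadd e1, hinv e1 (br e2 e3) e4, hinv e1 e3 (br e2 e4),
          hinv e1 e3 e4, hρadd e2, hinv e2 (br e1 e3) e4, hinv e2 e3 (br e1 e4),
          hinv (br e1 e2) e3 e4]
      simp only [map_sub, map_add, LinearMap.sub_apply, LinearMap.add_apply]
      ring
    have Kmul : ∀ f c : C,
        ρ e1 (ρ e2 (f * c)) - ρ e2 (ρ e1 (f * c)) - ρ (br e1 e2) (f * c)
        = f * (ρ e1 (ρ e2 c) - ρ e2 (ρ e1 c) - ρ (br e1 e2) c)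
          + c * (ρ e1 (ρ e2 f) - ρ e2 (ρ e1 f) - ρ (br e1 e2) f) := by
      intro f c
      rw [hρder e2 f c, hρder e1 f c, hρadd e1, hρadd e2,
          hρder e1 f (ρ e2 c), hρder e1 c (ρ e2 f),
          hρder e2 f (ρ e1 c), hρder e2 c (ρ e1 f),
          hρder (br e1 e2) f c]
      ring
    have hcc : ∀ a b : E,
        pair a b * (ρ e1 (ρ e2 f) - ρ e2 (ρ e1 f) - ρ (br e1 e2) f) = 0 := by
      intro a b
      have h1 := stepA (f • a) b
      have h2 := stepA a b
      rw [hJlin e1 e2 a f] at h1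
      simp only [map_smul, LinearMap.smul_apply, smul_eq_mul] at h1
      rw [Kmul f ((pair a) b)] at h1
      linear_combination h1 - f * h2
    have hz : ∀ a : E,
        (ρ e1 (ρ e2 f) - ρ e2 (ρ e1 f) - ρ (br e1 e2) f) • a = 0 := by
      intro a
      apply hnd
      intro e
      simp only [map_smul, LinearMap.smul_apply, smul_eq_mul]
      rw [mul_comm]
      exact hcc a e
    exact hfaith _ hz
  have main2 : ∀ (e : E) (f g : C),
      br e (f • D g) = f • D (ρ e g) + ρ e f • D g := by
    intro e f g
    rw [← sub_eq_zero]
    apply hnd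
    intro e'
    have hA := hinv e (f • D g) e'
    simp only [map_smul, LinearMap.smul_apply, smul_eq_mul, hDpair] at hA
    rw [hρder e f (ρ e' g)] at hA
    simp only [map_sub, map_add, map_smul, LinearMap.sub_apply, LinearMap.add_apply,
      LinearMap.smul_apply, smul_eq_mul, hDpair]
    linear_combination -hA + f * hK e e' g
  refine ⟨?_, main2⟩
  intro e f g
  have h2 : br (f • D g) e = D ((pair (f • D g)) e) - br e (f • D g) :=
    eq_sub_of_add_eq (hsym _ _)
  rw [main2, show (pair (f • D g)) e = f * ρ e g from by
      simp [map_smul, smul_eq_mul, hDpair], hDleib] at h2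
  rw [h2]
  abel
end
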